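/- Let m ≥ 1 and let M, Γ and A be symmetric positive definite real m×m matrices. Let κ₁² denote the smallest eigenvalue of Γ, let K be the positive definite symmetric square root of Γ, let b₁ > 0 denote the smallest eigenvalue of K⁻¹ A K⁻¹, let W > 0 denote the largest eigenvalue of K⁻¹ M K⁻¹, and set α = √(b₁/(2W)) and ε₁ = α/b₁. Then for every ε ∈ (0, ε₁) and every s ∈ ℝ with s ≠ 0, the matrix D(ε, s) = −ε s² M + i s Γ + ε A is invertible and ‖D(ε, s)⁻¹‖ ≤ (1/κ₁²) · min{ 2/(b₁ ε), max{ 1/α, 1/|s| } }. -/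

import Mathlib

/-!
Since `K * K = Γ`, the spectral bounds on `K⁻¹ A K⁻¹` and `K⁻¹ M K⁻¹` are the Loewner inequalities
`b₁ Γ ≤ A` and `M ≤ W Γ`, besides `κ₁² ≤ Γ`. So the forms `⟪x, P x⟫` on `ℂᵐ` are real, and
`⟪x, D x⟫ = ε (⟪x, A x⟫ - s² ⟪x, M x⟫) + i s ⟪x, Γ x⟫` has imaginary part `s ⟪x, Γ x⟫` and, when
`|s| ≤ α` (so that `s² W ≤ b₁ / 2`), real part at least `ε b₁ ⟪x, Γ x⟫ / 2`; when `|s| > α ≥ ε b₁`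
the imaginary part alone suffices. Hence `|⟪x, D x⟫| ≥ κ₁² max (ε b₁ / 2, |s|) ‖x‖²`, so by
Cauchy–Schwarz `D` is bounded below by `κ₁² max (ε b₁ / 2, |s|)`: it is invertible and
`‖D⁻¹‖ ≤ (κ₁² max (ε b₁ / 2, |s|))⁻¹`, which is at most the claimed bound.
-/

noncomputable section

/-- Operator norm of a complex `m × m` matrix induced by the Euclidean norm on `ℂ^m`. -/
def l2OpNorm (m : ℕ) (D : Matrix (Fin m) (Fin m) ℂ) : ℝ :=
  ‖LinearMap.toContinuousLinearMap (Matrix.toEuclideanLin D)‖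

/-- The propagator matrix `D(ε,s) = -ε s² M + i s Γ + ε A` with mass matrix `M`. -/
def propagatorM (m : ℕ) (M Γ A : Matrix (Fin m) (Fin m) ℝ) (ε s : ℝ) :
    Matrix (Fin m) (Fin m) ℂ :=
  (-(ε * s ^ 2) : ℂ) • M.map (fun a => (a : ℂ))
    + (Complex.I * s) • Γ.map (fun a => (a : ℂ))
    + (ε : ℂ) • A.map (fun a => (a : ℂ))

open Matrix
open scoped MatrixOrder ComplexOrder InnerProductSpace

namespace Matrix

variable {n : Type*} [Fintype n] [DecidableEq n]

section RCLike

variable {𝕜 : Type*} [RCLike 𝕜]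

theorem mul_inv_mul_mul_inv_mul_cancel {K : Matrix n n 𝕜} (hK : IsUnit K) (A : Matrix n n 𝕜) :
    K * (K⁻¹ * A * K⁻¹) * K = A := by
  have hdet := (isUnit_iff_isUnit_det K).mp hK
  rw [← Matrix.mul_assoc K, nonsing_inv_mul_cancel_right K _ hdet,
    mul_nonsing_inv_cancel_left K _ hdet]

theorem smul_mul_self_le_of_le_spectrum {K A : Matrix n n 𝕜} (hK : K.IsHermitian)
    (hKu : IsUnit K) (hA : A.IsHermitian) {b : ℝ}
    (hb : ∀ x ∈ spectrum ℝ (K⁻¹ * A * K⁻¹), b ≤ x) : b • (K * K) ≤ A := by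
  have hB : (K⁻¹ * A * K⁻¹).IsHermitian := by
    simpa [hK.inv.eq] using isHermitian_conjTranspose_mul_mul K⁻¹ hA
  rw [← algebraMap_le_iff_le_spectrum hB, Algebra.algebraMap_eq_smul_one] at hb
  simpa [mul_inv_mul_mul_inv_mul_cancel hKu] using hK.isSelfAdjoint.conjugate_le_conjugate hb

theorem le_smul_mul_self_of_spectrum_le {K A : Matrix n n 𝕜} (hK : K.IsHermitian)
    (hKu : IsUnit K) (hA : A.IsHermitian) {b : ℝ}
    (hb : ∀ x ∈ spectrum ℝ (K⁻¹ * A * K⁻¹), x ≤ b) : A ≤ b • (K * K) := by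
  have hB : (K⁻¹ * A * K⁻¹).IsHermitian := by
    simpa [hK.inv.eq] using isHermitian_conjTranspose_mul_mul K⁻¹ hA
  rw [← le_algebraMap_iff_spectrum_le hB, Algebra.algebraMap_eq_smul_one] at hb
  simpa [mul_inv_mul_mul_inv_mul_cancel hKu] using hK.isSelfAdjoint.conjugate_le_conjugate hb

theorem isUnit_of_forall_le_norm_toEuclideanLin {D : Matrix n n 𝕜} {c : ℝ} (hc : 0 < c)
    (h : ∀ x, c * ‖x‖ ≤ ‖toEuclideanLin D x‖) : IsUnit D := by
  rw [← isUnit_map_iff (toLpLinAlgEquiv 2 : Matrix n n 𝕜 ≃ₐ[𝕜] _),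
    LinearMap.isUnit_iff_ker_eq_bot, LinearMap.ker_eq_bot']
  intro x hx
  have hcx := h x
  rw [show toEuclideanLin D x = 0 from hx, norm_zero] at hcx
  exact norm_le_zero_iff.mp (nonpos_of_mul_nonpos_right hcx hc)

theorem norm_toEuclideanLin_inv_le {D : Matrix n n 𝕜} {c : ℝ} (hc : 0 < c)
    (h : ∀ x, c * ‖x‖ ≤ ‖toEuclideanLin D x‖) :
    ‖(toEuclideanLin D⁻¹).toContinuousLinearMap‖ ≤ c⁻¹ := by
  have hD := (isUnit_iff_isUnit_det D).mp (isUnit_of_forall_le_norm_toEuclideanLin hc h)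
  refine ContinuousLinearMap.opNorm_le_bound _ (inv_nonneg.mpr hc.le) fun w => ?_
  have hw := h (toEuclideanLin D⁻¹ w)
  rw [← LinearMap.comp_apply, ← toLpLin_mul_same, mul_nonsing_inv _ hD, toLpLin_one,
    LinearMap.id_apply] at hw
  rw [LinearMap.coe_toContinuousLinearMap', inv_mul_eq_div, le_div_iff₀' hc]
  exact hw

end RCLike

theorem PosSemidef.map_ofReal {P : Matrix n n ℝ} (hP : P.PosSemidef) :
    (P.map ((↑) : ℝ → ℂ)).PosSemidef := by
  obtain ⟨S, hS, rfl⟩ : ∃ S : Matrix n n ℝ, S.IsHermitian ∧ P = S * S :=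
    ⟨CFC.sqrt P, IsSelfAdjoint.of_nonneg (CFC.sqrt_nonneg P),
      (CFC.sqrt_mul_sqrt_self P hP.nonneg).symm⟩
  have hSc : (S.map Complex.ofRealHom)ᴴ = S.map Complex.ofRealHom := by
    rw [← conjTranspose_map _ (fun _ => by simp), hS.eq]
  change ((S * S).map Complex.ofRealHom).PosSemidef
  rw [Matrix.map_mul]
  simpa only [hSc] using posSemidef_conjTranspose_mul_self (S.map Complex.ofRealHom)

def complexifiedForm (P : Matrix n n ℝ) (x : EuclideanSpace ℂ n) : ℂ :=
  ⟪x, toEuclideanLin (P.map ((↑) : ℝ → ℂ)) x⟫_ℂ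

theorem complexifiedForm_smul (r : ℝ) (P : Matrix n n ℝ) (x : EuclideanSpace ℂ n) :
    complexifiedForm (r • P) x = r * complexifiedForm P x := by
  rw [complexifiedForm, Matrix.map_smul' _ _ _ (fun _ _ => Complex.ofReal_mul _ _), map_smul,
    LinearMap.smul_apply, inner_smul_right, complexifiedForm]

theorem complexifiedForm_one (x : EuclideanSpace ℂ n) :
    complexifiedForm 1 x = (‖x‖ ^ 2 : ℝ) := by
  simp [complexifiedForm]

theorem complexifiedForm_mono {P Q : Matrix n n ℝ} (h : P ≤ Q) (x : EuclideanSpace ℂ n) :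
    complexifiedForm P x ≤ complexifiedForm Q x := by
  simpa [complexifiedForm, Matrix.map_sub, inner_sub_right] using
    (isPositive_toEuclideanLin_iff.mpr (le_iff.mp h).map_ofReal).inner_nonneg_right x

end Matrix

theorem Complex.eq_re_of_le_ofReal {r : ℝ} {z : ℂ} (hz : z ≤ r) : z = z.re :=
  Complex.ext rfl (by simpa using (Complex.le_def.mp hz).2)

theorem max_mul_le_norm_of_form_bounds {ε b W α s g a μ : ℝ} (hε : 0 ≤ ε) (hW : 0 ≤ W)
    (hαW : α ^ 2 * W ≤ b / 2) (hεα : ε * b ≤ 2 * α) (hg : 0 ≤ g) (ha : b * g ≤ a)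
    (hμ : μ ≤ W * g) :
    max (ε * b / 2) |s| * g ≤ ‖(-(ε * s ^ 2) : ℂ) * μ + (Complex.I * s) * g + ε * a‖ := by
  set z : ℂ := (-(ε * s ^ 2) : ℂ) * μ + (Complex.I * s) * g + ε * a
  have hz : z = ((ε * (a - s ^ 2 * μ) : ℝ) : ℂ) + ((s * g : ℝ) : ℂ) * Complex.I := by
    push_cast
    ring
  have hzre : z.re = ε * (a - s ^ 2 * μ) := by
    rw [hz, Complex.add_re, Complex.mul_I_re, Complex.ofReal_re, Complex.ofReal_im, neg_zero,
      add_zero]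
  have hzim : z.im = s * g := by
    rw [hz, Complex.add_im, Complex.mul_I_im, Complex.ofReal_re, Complex.ofReal_im, zero_add]
  have him : |s| * g ≤ ‖z‖ := by
    simpa [hzim, abs_mul, abs_of_nonneg hg] using Complex.abs_im_le_norm z
  rw [max_mul_of_nonneg _ _ hg]
  refine max_le ?_ him
  rcases le_or_gt |s| α with hs | hs
  · have hsW : s ^ 2 * W ≤ b / 2 := by
      have : s ^ 2 ≤ α ^ 2 := by
        rw [← sq_abs]
        exact pow_le_pow_left₀ (abs_nonneg s) hs 2
      nlinarith
    have hre : b * g / 2 ≤ a - s ^ 2 * μ := by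
      nlinarith [mul_le_mul_of_nonneg_left hμ (sq_nonneg s), mul_le_mul_of_nonneg_right hsW hg]
    calc ε * b / 2 * g = ε * (b * g / 2) := by ring
      _ ≤ z.re := hzre ▸ mul_le_mul_of_nonneg_left hre hε
      _ ≤ ‖z‖ := Complex.re_le_norm z
  · calc ε * b / 2 * g ≤ |s| * g := by gcongr; linarith
      _ ≤ ‖z‖ := him

theorem inner_toEuclideanLin_propagatorM {m : ℕ} (M Γ A : Matrix (Fin m) (Fin m) ℝ) (ε s : ℝ)
    (x : EuclideanSpace ℂ (Fin m)) :
    ⟪x, toEuclideanLin (propagatorM m M Γ A ε s) x⟫_ℂ =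
      (-(ε * s ^ 2) : ℂ) * complexifiedForm M x + (Complex.I * s) * complexifiedForm Γ x
        + ε * complexifiedForm A x := by
  simp only [propagatorM, complexifiedForm, map_add, map_smul, LinearMap.add_apply,
    LinearMap.smul_apply, inner_add_right, inner_smul_right]

theorem le_norm_toEuclideanLin_propagatorM {m : ℕ} {M Γ A : Matrix (Fin m) (Fin m) ℝ}
    {κ b W α ε s : ℝ} (hκ : 0 ≤ κ) (hΓ : κ • 1 ≤ Γ) (hA : b • Γ ≤ A) (hM : M ≤ W • Γ)
    (hε : 0 ≤ ε) (hW : 0 ≤ W) (hαW : α ^ 2 * W ≤ b / 2) (hεα : ε * b ≤ 2 * α)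
    (x : EuclideanSpace ℂ (Fin m)) :
    κ * max (ε * b / 2) |s| * ‖x‖ ≤ ‖toEuclideanLin (propagatorM m M Γ A ε s) x‖ := by
  have hqΓ : ((κ * ‖x‖ ^ 2 : ℝ) : ℂ) ≤ complexifiedForm Γ x := by
    simpa [complexifiedForm_smul, complexifiedForm_one] using complexifiedForm_mono hΓ x
  have hqA := complexifiedForm_smul b Γ x ▸ complexifiedForm_mono hA x
  have hqM := complexifiedForm_smul W Γ x ▸ complexifiedForm_mono hM x
  have hγ := Complex.eq_re_of_ofReal_le hqΓ
  rw [hγ, ← Complex.ofReal_mul] at hqA hqM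
  set g := (complexifiedForm Γ x).re
  have hg : κ * ‖x‖ ^ 2 ≤ g := Complex.real_le_real.mp (hγ ▸ hqΓ)
  have key := max_mul_le_norm_of_form_bounds (s := s) hε hW hαW hεα
    ((mul_nonneg hκ (sq_nonneg _)).trans hg)
    (Complex.real_le_real.mp (Complex.eq_re_of_ofReal_le hqA ▸ hqA))
    (Complex.real_le_real.mp (Complex.eq_re_of_le_ofReal hqM ▸ hqM))
  rw [← Complex.eq_re_of_ofReal_le hqA, ← Complex.eq_re_of_le_ofReal hqM, ← hγ,
    ← inner_toEuclideanLin_propagatorM] at key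
  rcases (norm_nonneg x).eq_or_lt with hx | hx
  · simp [← hx]
  refine le_of_mul_le_mul_left ?_ hx
  calc ‖x‖ * (κ * max (ε * b / 2) |s| * ‖x‖) = max (ε * b / 2) |s| * (κ * ‖x‖ ^ 2) := by ring
    _ ≤ max (ε * b / 2) |s| * g := by gcongr
    _ ≤ ‖x‖ * ‖toEuclideanLin (propagatorM m M Γ A ε s) x‖ :=
      key.trans (norm_inner_le_norm _ _)

theorem inv_mul_max_le {κ b ε α s : ℝ} (hκ : 0 < κ) (hεb : 0 < ε * b) (hs : s ≠ 0) :
    (κ * max (ε * b / 2) |s|)⁻¹ ≤ 1 / κ * min (2 / (b * ε)) (max (1 / α) (1 / |s|)) := by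
  rw [mul_inv, one_div]
  gcongr
  refine le_min ?_ ((inv_anti₀ (abs_pos.2 hs) (le_max_right (ε * b / 2) |s|)).trans ?_)
  · calc (max (ε * b / 2) |s|)⁻¹ ≤ (ε * b / 2)⁻¹ := inv_anti₀ (by positivity) (le_max_left _ _)
      _ = 2 / (b * ε) := by rw [inv_div, mul_comm]
  · rw [one_div, one_div]
    exact le_max_right _ _

theorem propagator_inverse_bound_mass_matrix_general
    (m : ℕ)
    (M Γ A : Matrix (Fin m) (Fin m) ℝ)
    (hMsymm : M.IsSymm)
    (hΓpos : Γ.PosDef) (hAsymm : A.IsSymm)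
    (κ₁ : ℝ) (hκ : IsLeast (spectrum ℝ Γ) (κ₁ ^ 2))
    (K : Matrix (Fin m) (Fin m) ℝ) (hKpos : K.PosDef)
    (hKsq : K * K = Γ)
    (b₁ : ℝ) (hb₁pos : 0 < b₁) (hb₁ : IsLeast (spectrum ℝ (K⁻¹ * A * K⁻¹)) b₁)
    (W : ℝ) (hWpos : 0 < W) (hW : IsGreatest (spectrum ℝ (K⁻¹ * M * K⁻¹)) W)
    (α : ℝ) (hα : α = Real.sqrt (b₁ / (2 * W)))
    (ε : ℝ) (hε : 0 < ε) (hε₁ : ε < α / b₁)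
    (s : ℝ) (hs : s ≠ 0) :
    IsUnit (propagatorM m M Γ A ε s) ∧
      l2OpNorm m (propagatorM m M Γ A ε s)⁻¹
        ≤ (1 / κ₁ ^ 2) * min (2 / (b₁ * ε)) (max (1 / α) (1 / |s|)) := by
  have hκpos : 0 < κ₁ ^ 2 := (isStrictlyPositive_iff_posDef.mpr hΓpos).spectrum_pos hκ.1
  have hΓ : κ₁ ^ 2 • 1 ≤ Γ := by
    rw [← Algebra.algebraMap_eq_smul_one, algebraMap_le_iff_le_spectrum hΓpos.isHermitian]
    exact fun x hx => hκ.2 hx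
  have hA : b₁ • Γ ≤ A := hKsq ▸ smul_mul_self_le_of_le_spectrum hKpos.isHermitian hKpos.isUnit
    (isHermitian_iff_isSymm.mpr hAsymm) fun x hx => hb₁.2 hx
  have hM : M ≤ W • Γ := hKsq ▸ le_smul_mul_self_of_spectrum_le hKpos.isHermitian hKpos.isUnit
    (isHermitian_iff_isSymm.mpr hMsymm) fun x hx => hW.2 hx
  have hα₀ : 0 ≤ α := hα ▸ Real.sqrt_nonneg _
  have hαW : α ^ 2 * W = b₁ / 2 := by
    rw [hα, Real.sq_sqrt (by positivity)]
    field_simp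
  have hεα : ε * b₁ ≤ 2 * α := by linarith [(lt_div_iff₀ hb₁pos).mp hε₁]
  have hlow := le_norm_toEuclideanLin_propagatorM (s := s) hκpos.le hΓ hA hM hε.le hWpos.le
    hαW.le hεα
  have hc : 0 < κ₁ ^ 2 * max (ε * b₁ / 2) |s| := by positivity
  exact ⟨isUnit_of_forall_le_norm_toEuclideanLin hc hlow,
    (norm_toEuclideanLin_inv_le hc hlow).trans (inv_mul_max_le hκpos (by positivity) hs)⟩

theorem propagator_inverse_bound_mass_matrix
    (m : ℕ) (hm : 1 ≤ m)
    (M Γ A : Matrix (Fin m) (Fin m) ℝ)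
    (hMsymm : M.IsSymm) (hMpos : M.PosDef)
    (hΓsymm : Γ.IsSymm) (hΓpos : Γ.PosDef) (hAsymm : A.IsSymm) (hApos : A.PosDef)
    (κ₁ : ℝ) (hκ : IsLeast (spectrum ℝ Γ) (κ₁ ^ 2))
    (K : Matrix (Fin m) (Fin m) ℝ) (hKsymm : K.IsSymm) (hKpos : K.PosDef)
    (hKsq : K * K = Γ)
    (b₁ : ℝ) (hb₁pos : 0 < b₁) (hb₁ : IsLeast (spectrum ℝ (K⁻¹ * A * K⁻¹)) b₁)
    (W : ℝ) (hWpos : 0 < W) (hW : IsGreatest (spectrum ℝ (K⁻¹ * M * K⁻¹)) W)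
    (α : ℝ) (hα : α = Real.sqrt (b₁ / (2 * W)))
    (ε : ℝ) (hε : 0 < ε) (hε₁ : ε < α / b₁)
    (s : ℝ) (hs : s ≠ 0) :
    IsUnit (propagatorM m M Γ A ε s) ∧
      l2OpNorm m (propagatorM m M Γ A ε s)⁻¹
        ≤ (1 / κ₁ ^ 2) * min (2 / (b₁ * ε)) (max (1 / α) (1 / |s|)) :=
  propagator_inverse_bound_mass_matrix_general m M Γ A hMsymm hΓpos hAsymm κ₁ hκ K hKpos hKsq b₁
    hb₁pos hb₁ W hWpos hW α hα ε hε hε₁ s hs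

end
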